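/- arXiv:1311.0323 — 4 statements merged into one kernel-verified Lean document; each statement's English description precedes it below -/
import Mathlib

section
/- If L : ℕ → ℝ is a non-decreasing function satisfying L(r^m) = m * L(r) for all integers r, m ≥ 2, then there exists a constant c ≥ 0 such that L(r) = c * Real.logb 2 r for all r ≥ 2. -/
/-- Khinchin's lemma: a non-decreasing `L : ℕ → ℝ` with `L (r^m) = m * L r`
for all `r, m ≥ 2` must be a nonnegative multiple of `logb 2`. -/
theorem khinchin_log_lemma (L : ℕ → ℝ) (hmono : Monotone L)
    (hfe : ∀ r m : ℕ, 2 ≤ r → 2 ≤ m → L (r ^ m) = (m : ℝ) * L r) :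
    ∃ c : ℝ, 0 ≤ c ∧ ∀ r : ℕ, 2 ≤ r → L r = c * Real.logb 2 r := by
  have hL2 : 0 ≤ L 2 := by
    have h4 : L 4 = 2 * L 2 := by
      have := hfe 2 2 le_rfl le_rfl; norm_num at this; linarith [this]
    have hle : L 2 ≤ L 4 := hmono (by norm_num)
    linarith
  refine ⟨L 2, hL2, fun r hr => ?_⟩
  set x := Real.logb 2 r with hxdef
  have hr0 : (0:ℝ) < r := by positivity
  have hx1 : 1 ≤ x := by
    have : Real.logb 2 2 ≤ Real.logb 2 r :=
      (Real.logb_le_logb (by norm_num) (by norm_num) hr0).mpr (by exact_mod_cast hr)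
    simpa using this
  have key : ∀ n : ℕ, 2 ≤ n → |L r - L 2 * x| ≤ L 2 / n := by
    intro n hn
    have hn0 : (0:ℝ) < n := by positivity
    set m := ⌊(n:ℝ) * x⌋₊ with hmdef
    have hnx0 : 0 ≤ (n:ℝ) * x := by positivity
    have h1 : (m:ℝ) ≤ (n:ℝ) * x := Nat.floor_le hnx0
    have h2 : (n:ℝ) * x < (m:ℝ) + 1 := Nat.lt_floor_add_one _
    have hm2 : 2 ≤ m := by
      have : (2:ℝ) ≤ (n:ℝ) * x := by nlinarith [hx1, (show (2:ℝ) ≤ n by exact_mod_cast hn)]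
      exact Nat.le_floor (by exact_mod_cast this)
    have h2x : (2:ℝ) ^ x = (r:ℝ) := Real.rpow_logb (by norm_num) (by norm_num) hr0
    have A : (2:ℕ) ^ m ≤ r ^ n := by
      have : (2:ℝ) ^ (m:ℕ) ≤ (r:ℝ) ^ (n:ℕ) := by
        calc (2:ℝ) ^ (m:ℕ) = (2:ℝ) ^ (m:ℝ) := (Real.rpow_natCast 2 m).symm
        _ ≤ (2:ℝ) ^ ((n:ℝ) * x) := by
            exact Real.rpow_le_rpow_of_exponent_le (by norm_num) h1
        _ = ((2:ℝ) ^ x) ^ (n:ℝ) := by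
            rw [mul_comm, Real.rpow_mul (by norm_num)]
        _ = (r:ℝ) ^ (n:ℝ) := by rw [h2x]
        _ = (r:ℝ) ^ (n:ℕ) := Real.rpow_natCast _ _
      exact_mod_cast this
    have B : r ^ n ≤ (2:ℕ) ^ (m + 1) := by
      have : (r:ℝ) ^ (n:ℕ) ≤ (2:ℝ) ^ (m+1:ℕ) := by
        calc (r:ℝ) ^ (n:ℕ) = (r:ℝ) ^ (n:ℝ) := (Real.rpow_natCast _ _).symm
        _ = ((2:ℝ) ^ x) ^ (n:ℝ) := by rw [h2x]
        _ = (2:ℝ) ^ ((n:ℝ) * x) := by rw [mul_comm, Real.rpow_mul (by norm_num)]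
        _ ≤ (2:ℝ) ^ ((m:ℝ) + 1) := Real.rpow_le_rpow_of_exponent_le (by norm_num) h2.le
        _ = (2:ℝ) ^ (m+1:ℕ) := by rw [← Real.rpow_natCast 2 (m+1)]; push_cast; ring_nf
      exact_mod_cast this
    have hLA : (m:ℝ) * L 2 ≤ (n:ℝ) * L r := by
      have := hmono A
      rwa [hfe 2 m le_rfl hm2, hfe r n hr hn] at this
    have hLB : (n:ℝ) * L r ≤ ((m:ℝ) + 1) * L 2 := by
      have := hmono B
      rw [hfe r n hr hn, hfe 2 (m+1) le_rfl (by omega)] at this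
      push_cast at this
      linarith
    rw [abs_le]
    constructor
    · rw [le_sub_iff_add_le]
      have : (n:ℝ) * (L 2 * x - L 2 / n) ≤ (n:ℝ) * L r := by
        have hexp : (n:ℝ) * (L 2 * x - L 2 / n) = ((n:ℝ) * x) * L 2 - L 2 := by
          field_simp
        rw [hexp]
        nlinarith [hL2, h2]
      nlinarith [this, hn0]
    · rw [sub_le_iff_le_add]
      have : (n:ℝ) * L r ≤ (n:ℝ) * (L 2 / n + L 2 * x) := by
        have hexp : (n:ℝ) * (L 2 / n + L 2 * x) = L 2 + ((n:ℝ) * x) * L 2 := by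
          field_simp
        rw [hexp]
        nlinarith [hL2, h1]
      nlinarith [this, hn0]
  have hzero : |L r - L 2 * x| ≤ 0 := by
    refine le_of_forall_pos_le_add ?_
    intro ε hε
    obtain ⟨n₀, hn₀⟩ := exists_nat_gt (L 2 / ε)
    set n := max 2 n₀ with hndef
    have hn2 : 2 ≤ n := le_max_left _ _
    have hnn : (L 2 / ε) < n := lt_of_lt_of_le hn₀ (by exact_mod_cast le_max_right 2 n₀)
    have hn0 : (0:ℝ) < n := by positivity
    have : L 2 / n < ε := by
      rw [div_lt_iff₀ hn0]
      rw [div_lt_iff₀ hε] at hnn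
      linarith [hnn]
    have := le_trans (key n hn2) this.le
    linarith
  have : L r - L 2 * x = 0 := abs_eq_zero.mp (le_antisymm hzero (abs_nonneg _))
  linarith
end

section
/- (Hardy–Littlewood–Pólya mean equivalence) Let f, g : ℝ → ℝ be continuous and strictly monotone on an interval I. If f⁻¹(∑_k w_k f(x_k)) = g⁻¹(∑_k w_k g(x_k)) for all finite weight vectors w (w_k ≥ 0, ∑ w_k = 1) and all x_k ∈ I, then there exist constants a ≠ 0 and b with g(x) = a·f(x) + b for all x ∈ I. In particular it suffices that the identity hold for all two-point distributions (n = 2). -/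
private lemma hlp_aux (I : Set ℝ) (f g : ℝ → ℝ)
    (hfi : Set.InjOn f I)
    (hmean : ∀ x ∈ I, ∀ y ∈ I, ∀ t : ℝ, 0 ≤ t → t ≤ 1 →
      ∃ m ∈ I, f m = t * f x + (1 - t) * f y ∧
        g m = t * g x + (1 - t) * g y)
    (u v : ℝ) (hu : u ∈ I) (hv : v ∈ I) (hlt : f u < f v) :
    ∀ x ∈ I, (f v - f u) * (g x - g u) = (g v - g u) * (f x - f u) := by
  intro x hx
  have h12 : f v - f u ≠ 0 := sub_ne_zero.2 (ne_of_gt hlt)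
  rcases le_or_gt (f u) (f x) with h1 | h1
  · rcases le_or_gt (f x) (f v) with h2 | h2
    · -- f u ≤ f x ≤ f v
      set t : ℝ := (f v - f x) / (f v - f u) with ht
      have ht0 : 0 ≤ t := div_nonneg (by linarith) (by linarith)
      have ht1 : t ≤ 1 := by
        rw [div_le_one (by linarith)]; linarith
      obtain ⟨m, hm, hfm, hgm⟩ := hmean u hu v hv t ht0 ht1
      have hfmx : f m = f x := by
        rw [hfm, ht]; field_simp; ring
      have hmx : m = x := hfi hm hx hfmx
      subst hmx
      have hfx : f m = t * f u + (1 - t) * f v := hfm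
      rw [hgm, hfx]; ring
    · -- f v < f x
      set t : ℝ := (f x - f v) / (f x - f u) with ht
      have hd : (0:ℝ) < f x - f u := by linarith
      have ht0 : 0 ≤ t := div_nonneg (by linarith) (by linarith)
      have ht1 : t ≤ 1 := by rw [div_le_one hd]; linarith
      obtain ⟨m, hm, hfm, hgm⟩ := hmean u hu x hx t ht0 ht1
      have hfmv : f m = f v := by
        rw [hfm, ht]; field_simp; ring
      have hmv : m = v := hfi hm hv hfmv
      subst hmv
      rw [ht] at hgm hfm
      have hd' : f x - f u ≠ 0 := ne_of_gt hd
      field_simp at hgm hfm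
      linarith [hgm, hfm]
  · -- f x < f u
    set t : ℝ := (f v - f u) / (f v - f x) with ht
    have hd : (0:ℝ) < f v - f x := by linarith
    have ht0 : 0 ≤ t := div_nonneg (by linarith) (by linarith)
    have ht1 : t ≤ 1 := by rw [div_le_one hd]; linarith
    obtain ⟨m, hm, hfm, hgm⟩ := hmean x hx v hv t ht0 ht1
    have hfmu : f m = f u := by
      rw [hfm, ht]; field_simp; ring
    have hmu : m = u := hfi hm hu hfmu
    subst hmu
    rw [ht] at hgm hfm
    have hd' : f v - f x ≠ 0 := ne_of_gt hd
    field_simp at hgm hfm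
    linarith [hgm, hfm]

/-- Hardy–Littlewood–Pólya: two quasi-arithmetic means on an interval coincide
(it suffices that they coincide on all two-point distributions) iff the
generating functions are affinely related. -/
theorem quasiarithmetic_mean_equiv (I : Set ℝ) (hI : I.OrdConnected)
    (f g : ℝ → ℝ)
    (hfc : ContinuousOn f I) (hgc : ContinuousOn g I)
    (hfm : StrictMonoOn f I ∨ StrictAntiOn f I)
    (hgm : StrictMonoOn g I ∨ StrictAntiOn g I)
    (hmean : ∀ x ∈ I, ∀ y ∈ I, ∀ t : ℝ, 0 ≤ t → t ≤ 1 →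
      ∃ m ∈ I, f m = t * f x + (1 - t) * f y ∧
        g m = t * g x + (1 - t) * g y) :
    ∃ a b : ℝ, a ≠ 0 ∧ ∀ x ∈ I, g x = a * f x + b := by
  have hfi : Set.InjOn f I := hfm.elim (fun h => h.injOn) (fun h => h.injOn)
  have hgi : Set.InjOn g I := hgm.elim (fun h => h.injOn) (fun h => h.injOn)
  by_cases hsub : ∀ x ∈ I, ∀ y ∈ I, x = y
  · by_cases hne : ∃ u, u ∈ I
    · obtain ⟨u, hu⟩ := hne
      refine ⟨1, g u - f u, one_ne_zero, fun x hx => ?_⟩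
      have := hsub x hx u hu
      subst this; ring
    · exact ⟨1, 0, one_ne_zero, fun x hx => absurd ⟨x, hx⟩ hne⟩
  · push_neg at hsub
    obtain ⟨u, hu, v, hv, huv⟩ := hsub
    have hfuv : f u ≠ f v := fun h => huv (hfi hu hv h)
    have hguv : g u ≠ g v := fun h => huv (hgi hu hv h)
    have key : ∀ x ∈ I, (f v - f u) * (g x - g u) = (g v - g u) * (f x - f u) := by
      rcases lt_or_gt_of_ne hfuv with h | h
      · exact hlp_aux I f g hfi hmean u v hu hv h
      · intro x hx
        have := hlp_aux I f g hfi hmean v u hv hu h x hx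
        linarith
    refine ⟨(g v - g u) / (f v - f u), g u - (g v - g u) / (f v - f u) * f u, ?_, ?_⟩
    · exact div_ne_zero (sub_ne_zero.2 (Ne.symm hguv)) (sub_ne_zero.2 (Ne.symm hfuv))
    · intro x hx
      have h12 : f v - f u ≠ 0 := sub_ne_zero.2 (Ne.symm hfuv)
      have := key x hx
      field_simp
      linarith
end

section
/- The Sharma–Mittal entropy D_n(P) = (1/γ)·((∑_k p_k^α)^{(q−1)/(α−1)} − 1) is ⊕_γ pseudo-additive under direct products: D_{nm}(P ⋆ Q) = D_n(P) + D_m(Q) + γ·D_n(P)·D_m(Q), for all distributions P, Q with strictly positive entries. -/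
open Finset

/-- Pseudo-additivity of the Sharma–Mittal entropy under direct products. -/
theorem sharma_mittal_pseudo_additive {n m : ℕ} (α q γ : ℝ) (hα : 0 < α)
    (hα1 : α ≠ 1) (hq : q ≠ 1) (hγ : γ ≠ 0)
    (p : Fin n → ℝ) (r : Fin m → ℝ)
    (hp : ∀ i, 0 < p i) (hr : ∀ j, 0 < r j)
    (hpsum : ∑ i, p i = 1) (hrsum : ∑ j, r j = 1) :
    (1 / γ) * ((∑ k : Fin n × Fin m, (p k.1 * r k.2) ^ α) ^ ((q - 1) / (α - 1)) - 1) =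
      (1 / γ) * ((∑ i, p i ^ α) ^ ((q - 1) / (α - 1)) - 1) +
        (1 / γ) * ((∑ j, r j ^ α) ^ ((q - 1) / (α - 1)) - 1) +
        γ * ((1 / γ) * ((∑ i, p i ^ α) ^ ((q - 1) / (α - 1)) - 1)) *
          ((1 / γ) * ((∑ j, r j ^ α) ^ ((q - 1) / (α - 1)) - 1)) := by
  have hn : (0:ℕ) < n ∨ True := Or.inr trivial
  have hA : 0 < ∑ i, p i ^ α := by
    have : n ≠ 0 := by
      rintro rfl
      simp at hpsum
    rcases Nat.exists_eq_succ_of_ne_zero this with ⟨k, rfl⟩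
    exact Finset.sum_pos (fun i _ => Real.rpow_pos_of_pos (hp i) α) ⟨0, by simp⟩
  have hB : 0 < ∑ j, r j ^ α := by
    have : m ≠ 0 := by
      rintro rfl
      simp at hrsum
    rcases Nat.exists_eq_succ_of_ne_zero this with ⟨k, rfl⟩
    exact Finset.sum_pos (fun j _ => Real.rpow_pos_of_pos (hr j) α) ⟨0, by simp⟩
  have hsum : ∑ k : Fin n × Fin m, (p k.1 * r k.2) ^ α
      = (∑ i, p i ^ α) * (∑ j, r j ^ α) := by
    rw [Finset.sum_mul_sum, ← Finset.sum_product']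
    exact Finset.sum_congr rfl fun k _ =>
      Real.mul_rpow (hp k.1).le (hr k.2).le
  rw [hsum, Real.mul_rpow hA.le hB.le]
  field_simp
  ring
end

section
/- The Gaussian entropy G_n(P) = (1/γ)·(∏_k p_k^{(q−1)p_k} − 1) with γ(1−q) > 0 equals h(S_n(P)), where h(x) = (2^{(1−q)x} − 1)/γ and S_n(P) = −∑_k p_k logb 2 p_k is the Shannon entropy; consequently G_n is ⊕_γ pseudo-additive under direct products. -/
open Finset

/-- The Gaussian entropy equals `h` applied to the Shannon entropy, and is
consequently `⊕_γ` pseudo-additive under direct products. -/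
theorem gaussian_entropy_eq_h_shannon {q γ : ℝ} (hq : q ≠ 1) (hγ : γ ≠ 0)
    (hsign : 0 < γ * (1 - q)) :
    (∀ n : ℕ, ∀ p : Fin n → ℝ, (∀ i, 0 < p i) → (∑ i, p i = 1) →
      (1 / γ) * (Real.exp ((q - 1) * ∑ k, p k * Real.log (p k)) - 1) =
        (Real.exp ((1 - q) * (-∑ k, p k * Real.logb 2 (p k)) * Real.log 2) - 1) / γ) ∧
    (∀ n m : ℕ, ∀ p : Fin n → ℝ, ∀ r : Fin m → ℝ,
      (∀ i, 0 < p i) → (∀ j, 0 < r j) →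
      (∑ i, p i = 1) → (∑ j, r j = 1) →
      (1 / γ) * (Real.exp ((q - 1) *
          ∑ k : Fin n × Fin m, (p k.1 * r k.2) * Real.log (p k.1 * r k.2)) - 1) =
        (1 / γ) * (Real.exp ((q - 1) * ∑ i, p i * Real.log (p i)) - 1) +
          (1 / γ) * (Real.exp ((q - 1) * ∑ j, r j * Real.log (r j)) - 1) +
          γ * ((1 / γ) * (Real.exp ((q - 1) * ∑ i, p i * Real.log (p i)) - 1)) *
            ((1 / γ) * (Real.exp ((q - 1) * ∑ j, r j * Real.log (r j)) - 1))) := by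
  constructor
  · intro n p hp hs
    have h2 : Real.log 2 ≠ 0 := (Real.log_pos (by norm_num)).ne'
    have key : (1 - q) * (-∑ k, p k * Real.logb 2 (p k)) * Real.log 2 =
        (q - 1) * ∑ k, p k * Real.log (p k) := by
      have hl : ∀ k, p k * Real.logb 2 (p k) = p k * Real.log (p k) / Real.log 2 := by
        intro k; rw [Real.logb]; ring
      simp only [hl, ← Finset.sum_div]
      field_simp
      ring
    rw [key]; ring
  · intro n m p r hp hr hps hrs
    have key : ∑ k : Fin n × Fin m, (p k.1 * r k.2) * Real.log (p k.1 * r k.2) =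
        (∑ i, p i * Real.log (p i)) + ∑ j, r j * Real.log (r j) := by
      rw [Fintype.sum_prod_type]
      have : ∀ i j, (p i * r j) * Real.log (p i * r j) =
          r j * (p i * Real.log (p i)) + p i * (r j * Real.log (r j)) := by
        intro i j
        rw [Real.log_mul (hp i).ne' (hr j).ne']
        ring
      simp only [this, Finset.sum_add_distrib, ← Finset.mul_sum, ← Finset.sum_mul]
      rw [hrs, hps]; ring
    rw [key, mul_add, Real.exp_add]
    field_simp
    ring
end
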